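/- arXiv:2205.10280 — 5 statements merged into one kernel-verified Lean document; each statement's English description precedes it below -/
import Mathlib

section
/- Let Y_1,…,Y_n be i.i.d. random variables in a measurable space S, h : S^m → ℝ a symmetric measurable function with E|h(Y_1,…,Y_m)|^p < ∞ for some p ≥ 1, and m ≤ n. Then ‖U_n h(Y_1,…,Y_n) − E h(Y_1,…,Y_m)‖_{L_p} ≤ ‖h(Y_1,…,Y_m) − E h(Y_1,…,Y_m)‖_{L_p}, where U_n h is the U-statistic of order m with kernel h. -/
open MeasureTheory ProbabilityTheory
open scoped ENNReal

/-! The U-statistic is the average, over all injective `m`-tuples of indices, of the kernel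
evaluated at that tuple. By independence each such tuple of observations has the law
`P^⊗m`, so every summand has the law of `h(Y₁,…,Y_m)`. Minkowski's inequality then bounds
the `L_p` norm of the centred average by the average of equal norms. -/

theorem ProbabilityTheory.iIndepFun.identDistrib_precomp
    {Ω ι κ S : Type*} [MeasurableSpace Ω] [MeasurableSpace S] [Fintype κ] {μ : Measure Ω}
    {Y : ι → Ω → S} (hY : ∀ i, AEMeasurable (Y i) μ) (hindep : iIndepFun Y μ)
    (hident : ∀ i j, μ.map (Y i) = μ.map (Y j))
    {e e' : κ → ι} (he : e.Injective) (he' : e'.Injective) :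
    IdentDistrib (fun ω k => Y (e k) ω) (fun ω k => Y (e' k) ω) μ μ where
  aemeasurable_fst := aemeasurable_pi_lambda _ fun k => hY (e k)
  aemeasurable_snd := aemeasurable_pi_lambda _ fun k => hY (e' k)
  map_eq := by
    rw [(hindep.precomp he).map_fun_eq_pi_map fun k => hY (e k),
      (hindep.precomp he').map_fun_eq_pi_map fun k => hY (e' k)]
    exact congrArg Measure.pi (funext fun k => hident _ _)

section Average

variable {Ω Ω' : Type*} [MeasurableSpace Ω] [MeasurableSpace Ω'] {μ : Measure Ω}
  {ν : Measure Ω'}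

theorem eLpNorm_average_le_of_identDistrib {ι E : Type*} [Fintype ι] [NormedAddCommGroup E]
    [NormedSpace ℝ E] [MeasurableSpace E] [BorelSpace E] [SecondCountableTopology E]
    {f : ι → Ω → E} {g : Ω' → E} {p : ℝ≥0∞} (hp : 1 ≤ p)
    (hf : ∀ i, IdentDistrib (f i) g μ ν) :
    eLpNorm (fun ω => (Fintype.card ι : ℝ)⁻¹ • ∑ i, f i ω) p μ ≤ eLpNorm g p ν := by
  have hcard : ‖(Fintype.card ι : ℝ)⁻¹‖ₑ * Fintype.card ι ≤ 1 := by
    rcases Nat.eq_zero_or_pos (Fintype.card ι) with h0 | hpos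
    · simp [h0]
    · rw [enorm_inv (by positivity), Real.enorm_natCast,
        ENNReal.inv_mul_cancel (by positivity) (by simp)]
  calc eLpNorm (fun ω => (Fintype.card ι : ℝ)⁻¹ • ∑ i, f i ω) p μ
      = ‖(Fintype.card ι : ℝ)⁻¹‖ₑ * eLpNorm (∑ i, f i) p μ := by
        rw [← eLpNorm_const_smul]
        congr 1
        ext ω
        simp only [Pi.smul_apply, Finset.sum_apply]
    _ ≤ ‖(Fintype.card ι : ℝ)⁻¹‖ₑ * ∑ i, eLpNorm (f i) p μ := by
        gcongr
        exact eLpNorm_sum_le (fun i _ => (hf i).aemeasurable_fst.aestronglyMeasurable) hp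
    _ = ‖(Fintype.card ι : ℝ)⁻¹‖ₑ * Fintype.card ι * eLpNorm g p ν := by
        simp only [fun i => (hf i).eLpNorm_eq p, Finset.sum_const, Finset.card_univ,
          nsmul_eq_mul, mul_assoc]
    _ ≤ eLpNorm g p ν := by
        simpa using mul_le_mul_left hcard (eLpNorm g p ν)

theorem integral_norm_rpow_le_of_eLpNorm_le {E : Type*} [NormedAddCommGroup E]
    {f : Ω → E} {g : Ω' → E} {p : ℝ≥0∞} (hp0 : p ≠ 0) (hpt : p ≠ ∞)
    (hf : AEStronglyMeasurable f μ) (hg : MemLp g p ν)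
    (hfg : eLpNorm f p μ ≤ eLpNorm g p ν) :
    ∫ ω, ‖f ω‖ ^ p.toReal ∂μ ≤ ∫ ω, ‖g ω‖ ^ p.toReal ∂ν := by
  have hf' : MemLp f p μ := ⟨hf, hfg.trans_lt hg.2⟩
  have hp : 0 < p.toReal := ENNReal.toReal_pos hp0 hpt
  have hIf : 0 ≤ ∫ ω, ‖f ω‖ ^ p.toReal ∂μ := integral_nonneg fun _ => by positivity
  have hIg : 0 ≤ ∫ ω, ‖g ω‖ ^ p.toReal ∂ν := integral_nonneg fun _ => by positivity
  rw [hf'.eLpNorm_eq_integral_rpow_norm hp0 hpt, hg.eLpNorm_eq_integral_rpow_norm hp0 hpt,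
    ENNReal.ofReal_le_ofReal_iff (by positivity)] at hfg
  exact (Real.rpow_le_rpow_iff hIf hIg (inv_pos.2 hp)).1 hfg

theorem integral_abs_average_rpow_le_of_identDistrib {ι : Type*} [Fintype ι]
    {f : ι → Ω → ℝ} {g : Ω' → ℝ} {p : ℝ} (hp : 1 ≤ p)
    (hf : ∀ i, IdentDistrib (f i) g μ ν) (hg : MemLp g (ENNReal.ofReal p) ν) :
    ∫ ω, |(Fintype.card ι : ℝ)⁻¹ * ∑ i, f i ω| ^ p ∂μ ≤ ∫ ω, |g ω| ^ p ∂ν := by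
  have hp0 : ENNReal.ofReal p ≠ 0 := (ENNReal.ofReal_pos.2 (by linarith)).ne'
  have hsum : AEMeasurable (fun ω => ∑ i, f i ω) μ :=
    Finset.aemeasurable_fun_sum _ fun i _ => (hf i).aemeasurable_fst
  have key := integral_norm_rpow_le_of_eLpNorm_le hp0 ENNReal.ofReal_ne_top
    (hsum.const_mul (Fintype.card ι : ℝ)⁻¹).aestronglyMeasurable hg
    (eLpNorm_average_le_of_identDistrib (ENNReal.one_le_ofReal.2 hp) hf)
  simpa only [ENNReal.toReal_ofReal (zero_le_one.trans hp), Real.norm_eq_abs] using key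

end Average

theorem Finset.inv_card_mul_sum_sub_const {ι K : Type*} [Fintype ι] [Nonempty ι]
    [DivisionRing K] [CharZero K] (f : ι → K) (c : K) :
    (Fintype.card ι : K)⁻¹ * ∑ i, f i - c = (Fintype.card ι : K)⁻¹ * ∑ i, (f i - c) := by
  rw [Finset.sum_sub_distrib, Finset.sum_const, Finset.card_univ, nsmul_eq_mul, mul_sub,
    inv_mul_cancel_left₀ (Nat.cast_ne_zero.2 Fintype.card_ne_zero)]

theorem u_statistic_Lp_contraction_general
    {S : Type*} [MeasurableSpace S]
    {Ω : Type*} [MeasurableSpace Ω] (μ : Measure Ω) [IsProbabilityMeasure μ]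
    (n m : ℕ) (hmn : m ≤ n)
    (Y : Fin n → Ω → S) (hYmeas : ∀ i, Measurable (Y i))
    (hindep : ProbabilityTheory.iIndepFun Y μ)
    (hident : ∀ i j, Measure.map (Y i) μ = Measure.map (Y j) μ)
    (h : (Fin m → S) → ℝ) (hhmeas : Measurable h)
    (p : ℝ) (hp : 1 ≤ p)
    (hintp : Integrable (fun ω => |h (fun i => Y (Fin.castLE hmn i) ω)| ^ p) μ) :
    (∫ ω, |(↑(Fintype.card (Fin m ↪ Fin n)))⁻¹ *
            (∑ e : Fin m ↪ Fin n, h (fun i => Y (e i) ω)) -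
          ∫ ω', h (fun i => Y (Fin.castLE hmn i) ω') ∂μ| ^ p ∂μ)
      ≤ ∫ ω, |h (fun i => Y (Fin.castLE hmn i) ω) -
          ∫ ω', h (fun i => Y (Fin.castLE hmn i) ω') ∂μ| ^ p ∂μ := by
  set c := ∫ ω', h (fun i => Y (Fin.castLE hmn i) ω') ∂μ
  have hcentred_ident (e : Fin m ↪ Fin n) :
      IdentDistrib (fun ω => h (fun i => Y (e i) ω) - c)
        (fun ω => h (fun i => Y (Fin.castLE hmn i) ω) - c) μ μ :=
    (hindep.identDistrib_precomp (fun i => (hYmeas i).aemeasurable) hident e.injective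
      (Fin.castLE_injective hmn)).comp (hhmeas.sub_const c)
  have hkernel_memLp : MemLp (fun ω => h (fun i => Y (Fin.castLE hmn i) ω))
      (ENNReal.ofReal p) μ := by
    refine (integrable_norm_rpow_iff ?_ (ENNReal.ofReal_pos.2 (by linarith)).ne'
      ENNReal.ofReal_ne_top).1 ?_
    · exact (hhmeas.comp (measurable_pi_lambda _ fun i => hYmeas _)).aestronglyMeasurable
    · simpa only [ENNReal.toReal_ofReal (zero_le_one.trans hp), Real.norm_eq_abs] using hintp
  have : Nonempty (Fin m ↪ Fin n) := ⟨⟨_, Fin.castLE_injective hmn⟩⟩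
  simp_rw [Finset.inv_card_mul_sum_sub_const]
  exact integral_abs_average_rpow_le_of_identDistrib hp hcentred_ident
    (hkernel_memLp.sub (memLp_const c))

/-- Jensen-type `L_p` contraction for U-statistics: for i.i.d. `Y₁,…,Y_n` and a symmetric
kernel `h` of `m ≤ n` variables with `E|h|^p < ∞`,
`E|U_n h − E h|^p ≤ E|h(Y₁,…,Y_m) − E h|^p`. -/
theorem u_statistic_Lp_contraction
    {S : Type*} [MeasurableSpace S]
    {Ω : Type*} [MeasurableSpace Ω] (μ : Measure Ω) [IsProbabilityMeasure μ]
    (n m : ℕ) (hm : 0 < m) (hmn : m ≤ n)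
    (Y : Fin n → Ω → S) (hYmeas : ∀ i, Measurable (Y i))
    (hindep : ProbabilityTheory.iIndepFun Y μ)
    (hident : ∀ i j, Measure.map (Y i) μ = Measure.map (Y j) μ)
    (h : (Fin m → S) → ℝ) (hhmeas : Measurable h)
    (hsymm : ∀ (σ : Equiv.Perm (Fin m)) (y : Fin m → S), h (y ∘ σ) = h y)
    (p : ℝ) (hp : 1 ≤ p)
    (hint : Integrable (fun ω => h (fun i => Y (Fin.castLE hmn i) ω)) μ)
    (hintp : Integrable (fun ω => |h (fun i => Y (Fin.castLE hmn i) ω)| ^ p) μ) :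
    (∫ ω, |(↑(Fintype.card (Fin m ↪ Fin n)))⁻¹ *
            (∑ e : Fin m ↪ Fin n, h (fun i => Y (e i) ω)) -
          ∫ ω', h (fun i => Y (Fin.castLE hmn i) ω') ∂μ| ^ p ∂μ)
      ≤ ∫ ω, |h (fun i => Y (Fin.castLE hmn i) ω) -
          ∫ ω', h (fun i => Y (Fin.castLE hmn i) ω') ∂μ| ^ p ∂μ :=
  u_statistic_Lp_contraction_general μ n m hmn Y hYmeas hindep hident h hhmeas p hp hintp
end

section
/- Let x_1, …, x_N ∈ E (Banach space) and let Σ^{(N)}u := Σ_{j=1}^N ⟨x_j,u⟩ x_j. For a matrix Z = (Z_{jk}) ∈ ℝ^{N×n} define X_k(Z) := Σ_{j=1}^N Z_{jk} x_j and Σ̂^{(N)}(Z) := n^{-1} Σ_{k=1}^n X_k(Z) ⊗ X_k(Z). Then for any Z, Z̃ ∈ ℝ^{N×n}: ‖Σ̂^{(N)}(Z) − Σ̂^{(N)}(Z̃)‖ ≤ (‖Σ̂^{(N)}(Z)‖^{1/2} + ‖Σ̂^{(N)}(Z̃)‖^{1/2}) · (‖Σ^{(N)}‖^{1/2}/√n)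 · ‖Z − Z̃‖_{ℓ₂}, where ‖·‖ is the operator norm on L(E*,E) and ‖·‖_{ℓ₂} the Euclidean norm on ℝ^{N×n}. -/
/-- Cauchy–Schwarz for finite sums, absolute-value version. -/
lemma abs_sum_mul_le_sqrt {ι : Type*} [Fintype ι] (f g : ι → ℝ) :
    |∑ i, f i * g i| ≤ Real.sqrt (∑ i, f i ^ 2) * Real.sqrt (∑ i, g i ^ 2) := by
  have h := Finset.sum_mul_sq_le_sq_mul_sq Finset.univ f g
  have := Real.sqrt_le_sqrt h
  rwa [Real.sqrt_sq_eq_abs, Real.sqrt_mul (Finset.sum_nonneg fun i _ => sq_nonneg _)] at this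

/-- Lipschitz property of the sample covariance `Σ̂⁽ᴺ⁾(Z)` as a function of the Gaussian
matrix `Z ∈ ℝ^{N×n}` (Euclidean norm):
`‖Σ̂(Z) − Σ̂(Z̃)‖ ≤ (‖Σ̂(Z)‖^{1/2} + ‖Σ̂(Z̃)‖^{1/2}) · (‖Σ⁽ᴺ⁾‖^{1/2}/√n) · ‖Z − Z̃‖₂`. -/
theorem sample_covariance_lipschitz
    {E : Type*} [NormedAddCommGroup E] [NormedSpace ℝ E]
    (N n : ℕ) (hn : 0 < n) (x : Fin N → E)
    (S : (E →L[ℝ] ℝ) →L[ℝ] E)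
    (hS : ∀ u, S u = ∑ j, u (x j) • x j)
    (Shat : EuclideanSpace ℝ (Fin N × Fin n) → ((E →L[ℝ] ℝ) →L[ℝ] E))
    (hShat : ∀ Z u, Shat Z u =
      (n : ℝ)⁻¹ • ∑ km : Fin n,
        u (∑ j : Fin N, Z (j, km) • x j) • (∑ j : Fin N, Z (j, km) • x j))
    (Z Z' : EuclideanSpace ℝ (Fin N × Fin n)) :
    ‖Shat Z - Shat Z'‖
      ≤ (Real.sqrt ‖Shat Z‖ + Real.sqrt ‖Shat Z'‖) *
          (Real.sqrt ‖S‖ / Real.sqrt n) * ‖Z - Z'‖ := by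
  have hnR : (0:ℝ) < n := Nat.cast_pos.mpr hn
  have hsn : (0:ℝ) < Real.sqrt n := Real.sqrt_pos.mpr hnR
  -- Key 1 : ∑ u(x j)² ≤ ‖S‖ ‖u‖²
  have key1 : ∀ u : E →L[ℝ] ℝ, ∑ j, (u (x j)) ^ 2 ≤ ‖S‖ * ‖u‖ ^ 2 := by
    intro u
    have h1 : ∑ j, (u (x j)) ^ 2 = u (S u) := by
      rw [hS, map_sum]; simp [sq, smul_eq_mul]
    rw [h1]
    calc u (S u) ≤ |u (S u)| := le_abs_self _
      _ ≤ ‖u‖ * ‖S u‖ := by rw [← Real.norm_eq_abs]; exact u.le_opNorm _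
      _ ≤ ‖u‖ * (‖S‖ * ‖u‖) := by
          exact mul_le_mul_of_nonneg_left (S.le_opNorm u) (norm_nonneg u)
      _ = ‖S‖ * ‖u‖ ^ 2 := by ring
  -- Key 2 : ∑ₖ u(X_k(Y))² ≤ n ‖Σ̂(Y)‖ ‖u‖²
  have key2 : ∀ (u : E →L[ℝ] ℝ) (Y : EuclideanSpace ℝ (Fin N × Fin n)),
      ∑ k, (u (∑ j, Y (j, k) • x j)) ^ 2 ≤ n * ‖Shat Y‖ * ‖u‖ ^ 2 := by
    intro u Y
    have h1 : u (Shat Y u) = (n:ℝ)⁻¹ * ∑ k, (u (∑ j, Y (j, k) • x j)) ^ 2 := by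
      rw [hShat, map_smul, map_sum]; simp [sq, smul_eq_mul]
    have h2 : ∑ k, (u (∑ j, Y (j, k) • x j)) ^ 2 = n * u (Shat Y u) := by
      rw [h1]; field_simp
    rw [h2]
    have : u (Shat Y u) ≤ ‖Shat Y‖ * ‖u‖ ^ 2 := by
      calc u (Shat Y u) ≤ |u (Shat Y u)| := le_abs_self _
        _ ≤ ‖u‖ * ‖Shat Y u‖ := by rw [← Real.norm_eq_abs]; exact u.le_opNorm _
        _ ≤ ‖u‖ * (‖Shat Y‖ * ‖u‖) := by
            exact mul_le_mul_of_nonneg_left ((Shat Y).le_opNorm u) (norm_nonneg u)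
        _ = ‖Shat Y‖ * ‖u‖ ^ 2 := by ring
    nlinarith [this]
  -- Key 3 : ∑ₖ (u(X_k(Z)) − u(X_k(Z')))² ≤ ‖S‖ ‖u‖² ‖Z−Z'‖²
  have hWsq : ‖Z - Z'‖ ^ 2 = ∑ k : Fin n, ∑ j : Fin N, ((Z - Z') (j, k)) ^ 2 := by
    rw [EuclideanSpace.norm_eq, Real.sq_sqrt (Finset.sum_nonneg fun i _ => sq_nonneg _),
      Fintype.sum_prod_type, Finset.sum_comm]
    simp [Real.norm_eq_abs, sq_abs]
  have key3 : ∀ u : E →L[ℝ] ℝ,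
      ∑ k, (u (∑ j, Z (j, k) • x j) - u (∑ j, Z' (j, k) • x j)) ^ 2
        ≤ ‖S‖ * ‖u‖ ^ 2 * ‖Z - Z'‖ ^ 2 := by
    intro u
    have hterm : ∀ k : Fin n,
        (u (∑ j, Z (j, k) • x j) - u (∑ j, Z' (j, k) • x j)) ^ 2
          ≤ (∑ j, ((Z - Z') (j, k)) ^ 2) * ∑ j, (u (x j)) ^ 2 := by
      intro k
      have hd : u (∑ j, Z (j, k) • x j) - u (∑ j, Z' (j, k) • x j)
          = ∑ j, (Z - Z') (j, k) * u (x j) := by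
        rw [← map_sub, ← Finset.sum_sub_distrib, map_sum]
        refine Finset.sum_congr rfl fun j _ => ?_
        rw [← sub_smul, map_smul, smul_eq_mul]
        rfl
      rw [hd]
      exact Finset.sum_mul_sq_le_sq_mul_sq Finset.univ _ _
    calc ∑ k, (u (∑ j, Z (j, k) • x j) - u (∑ j, Z' (j, k) • x j)) ^ 2
        ≤ ∑ k, (∑ j, ((Z - Z') (j, k)) ^ 2) * ∑ j, (u (x j)) ^ 2 :=
          Finset.sum_le_sum fun k _ => hterm k
      _ = (∑ k : Fin n, ∑ j : Fin N, ((Z - Z') (j, k)) ^ 2) * ∑ j, (u (x j)) ^ 2 := by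
          rw [Finset.sum_mul]
      _ ≤ (∑ k : Fin n, ∑ j : Fin N, ((Z - Z') (j, k)) ^ 2) * (‖S‖ * ‖u‖ ^ 2) := by
          refine mul_le_mul_of_nonneg_left (key1 u) ?_
          exact Finset.sum_nonneg fun k _ => Finset.sum_nonneg fun j _ => sq_nonneg _
      _ = ‖S‖ * ‖u‖ ^ 2 * ‖Z - Z'‖ ^ 2 := by rw [← hWsq]; ring
  -- Assemble
  have hC : 0 ≤ (Real.sqrt ‖Shat Z‖ + Real.sqrt ‖Shat Z'‖) *
      (Real.sqrt ‖S‖ / Real.sqrt n) * ‖Z - Z'‖ := by positivity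
  refine ContinuousLinearMap.opNorm_le_bound _ hC fun u => ?_
  refine NormedSpace.norm_le_dual_bound ℝ _ (by positivity) fun v => ?_
  -- compute v ((Shat Z - Shat Z') u)
  set p : Fin n → ℝ := fun k => u (∑ j, Z (j, k) • x j) with hp
  set p' : Fin n → ℝ := fun k => u (∑ j, Z' (j, k) • x j) with hp'
  set q : Fin n → ℝ := fun k => v (∑ j, Z (j, k) • x j) with hq
  set q' : Fin n → ℝ := fun k => v (∑ j, Z' (j, k) • x j) with hq'
  have hval : v ((Shat Z - Shat Z') u)
      = (n:ℝ)⁻¹ * ((∑ k, (p k - p' k) * q k) + ∑ k, p' k * (q k - q' k)) := by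
    have e1 : v (Shat Z u) = (n:ℝ)⁻¹ * ∑ k, p k * q k := by
      rw [hShat, map_smul, map_sum]; simp [hp, hq, smul_eq_mul]
    have e2 : v (Shat Z' u) = (n:ℝ)⁻¹ * ∑ k, p' k * q' k := by
      rw [hShat, map_smul, map_sum]; simp [hp', hq', smul_eq_mul]
    have : v ((Shat Z - Shat Z') u) = v (Shat Z u) - v (Shat Z' u) := by
      simp [ContinuousLinearMap.sub_apply]
    rw [this, e1, e2, ← mul_sub]
    congr 1
    rw [← Finset.sum_add_distrib, ← Finset.sum_sub_distrib]
    refine Finset.sum_congr rfl fun k _ => ?_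
    ring
  rw [Real.norm_eq_abs, hval, abs_mul, abs_inv, abs_of_pos hnR]
  have cs1 : |∑ k, (p k - p' k) * q k|
      ≤ Real.sqrt (∑ k, (p k - p' k) ^ 2) * Real.sqrt (∑ k, q k ^ 2) :=
    abs_sum_mul_le_sqrt _ _
  have cs2 : |∑ k, p' k * (q k - q' k)|
      ≤ Real.sqrt (∑ k, p' k ^ 2) * Real.sqrt (∑ k, (q k - q' k) ^ 2) :=
    abs_sum_mul_le_sqrt _ _
  have b1 : Real.sqrt (∑ k, (p k - p' k) ^ 2) ≤ Real.sqrt ‖S‖ * ‖u‖ * ‖Z - Z'‖ := by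
    have := Real.sqrt_le_sqrt (key3 u)
    calc Real.sqrt (∑ k, (p k - p' k) ^ 2) ≤ Real.sqrt (‖S‖ * ‖u‖ ^ 2 * ‖Z - Z'‖ ^ 2) := this
      _ = Real.sqrt ‖S‖ * ‖u‖ * ‖Z - Z'‖ := by
          rw [Real.sqrt_mul (by positivity), Real.sqrt_mul (norm_nonneg S),
            Real.sqrt_sq (norm_nonneg u), Real.sqrt_sq (norm_nonneg _)]
  have b2 : Real.sqrt (∑ k, q k ^ 2) ≤ Real.sqrt n * Real.sqrt ‖Shat Z‖ * ‖v‖ := by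
    have := Real.sqrt_le_sqrt (key2 v Z)
    calc Real.sqrt (∑ k, q k ^ 2) ≤ Real.sqrt (n * ‖Shat Z‖ * ‖v‖ ^ 2) := this
      _ = Real.sqrt n * Real.sqrt ‖Shat Z‖ * ‖v‖ := by
          rw [Real.sqrt_mul (by positivity), Real.sqrt_mul hnR.le,
            Real.sqrt_sq (norm_nonneg v)]
  have b3 : Real.sqrt (∑ k, p' k ^ 2) ≤ Real.sqrt n * Real.sqrt ‖Shat Z'‖ * ‖u‖ := by
    have := Real.sqrt_le_sqrt (key2 u Z')
    calc Real.sqrt (∑ k, p' k ^ 2) ≤ Real.sqrt (n * ‖Shat Z'‖ * ‖u‖ ^ 2) := this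
      _ = Real.sqrt n * Real.sqrt ‖Shat Z'‖ * ‖u‖ := by
          rw [Real.sqrt_mul (by positivity), Real.sqrt_mul hnR.le,
            Real.sqrt_sq (norm_nonneg u)]
  have b4 : Real.sqrt (∑ k, (q k - q' k) ^ 2) ≤ Real.sqrt ‖S‖ * ‖v‖ * ‖Z - Z'‖ := by
    have := Real.sqrt_le_sqrt (key3 v)
    calc Real.sqrt (∑ k, (q k - q' k) ^ 2) ≤ Real.sqrt (‖S‖ * ‖v‖ ^ 2 * ‖Z - Z'‖ ^ 2) := this
      _ = Real.sqrt ‖S‖ * ‖v‖ * ‖Z - Z'‖ := by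
          rw [Real.sqrt_mul (by positivity), Real.sqrt_mul (norm_nonneg S),
            Real.sqrt_sq (norm_nonneg v), Real.sqrt_sq (norm_nonneg _)]
  have habs : |(∑ k, (p k - p' k) * q k) + ∑ k, p' k * (q k - q' k)|
      ≤ (Real.sqrt ‖S‖ * ‖u‖ * ‖Z - Z'‖) * (Real.sqrt n * Real.sqrt ‖Shat Z‖ * ‖v‖)
        + (Real.sqrt n * Real.sqrt ‖Shat Z'‖ * ‖u‖) * (Real.sqrt ‖S‖ * ‖v‖ * ‖Z - Z'‖) := by
    refine (abs_add_le _ _).trans (add_le_add ?_ ?_)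
    · exact cs1.trans (mul_le_mul b1 b2 (Real.sqrt_nonneg _) (by positivity))
    · exact cs2.trans (mul_le_mul b3 b4 (Real.sqrt_nonneg _) (by positivity))
  have hnn : (n:ℝ)⁻¹ * Real.sqrt n = 1 / Real.sqrt n := by
    rw [eq_div_iff hsn.ne', mul_assoc, Real.mul_self_sqrt hnR.le, inv_mul_cancel₀ hnR.ne']
  calc (n:ℝ)⁻¹ * |(∑ k, (p k - p' k) * q k) + ∑ k, p' k * (q k - q' k)|
      ≤ (n:ℝ)⁻¹ * ((Real.sqrt ‖S‖ * ‖u‖ * ‖Z - Z'‖) * (Real.sqrt n * Real.sqrt ‖Shat Z‖ * ‖v‖)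
        + (Real.sqrt n * Real.sqrt ‖Shat Z'‖ * ‖u‖) * (Real.sqrt ‖S‖ * ‖v‖ * ‖Z - Z'‖)) := by
        exact mul_le_mul_of_nonneg_left habs (by positivity)
    _ = (Real.sqrt ‖Shat Z‖ + Real.sqrt ‖Shat Z'‖) * (Real.sqrt ‖S‖ / Real.sqrt n)
          * ‖Z - Z'‖ * ‖u‖ * ‖v‖ := by
        field_simp
        ring_nf
        rw [Real.sq_sqrt hnR.le]
        ring
    _ = (Real.sqrt ‖Shat Z‖ + Real.sqrt ‖Shat Z'‖) * (Real.sqrt ‖S‖ / Real.sqrt n)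
          * ‖Z - Z'‖ * ‖u‖ * ‖v‖ := rfl
end

section
/- With the notation of the previous statement, the map Z ↦ ‖Σ̂^{(N)}(Z)‖^{1/2} from ℝ^{N×n} (Euclidean norm) to ℝ is Lipschitz with constant ‖Σ^{(N)}‖^{1/2}/√n. -/
/-!
For a finite family `y` in `E`, write `Σ_y = ∑ₖ yₖ ⊗ yₖ` (`covarianceOp y`) and
`L_y : E* → ℓ²`, `u ↦ (u yₖ)ₖ` (`evalFamily y`). Since `v (Σ_y u) = ⟪L_y u, L_y v⟫`, the operator
norms satisfy `‖Σ_y‖ = ‖L_y‖²`. Thus `‖Σ̂(Z)‖^{1/2} = ‖L_{X(Z)}‖ / √n`, where `Z ↦ L_{X(Z)}` is linear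
and, by Cauchy–Schwarz, `‖L_{X(W)}‖ ≤ ‖W‖ ‖L_x‖ = ‖W‖ ‖Σ‖^{1/2}`; the reverse triangle inequality
concludes.
-/

section

variable {E : Type*} [NormedAddCommGroup E] [NormedSpace ℝ E] {ι : Type*}

noncomputable def evalFamily (y : ι → E) : (E →L[ℝ] ℝ) →L[ℝ] EuclideanSpace ℝ ι :=
  (EuclideanSpace.equiv ι ℝ).symm.toContinuousLinearMap.comp
    (ContinuousLinearMap.pi fun k => ContinuousLinearMap.apply ℝ ℝ (y k))

@[simp]
theorem evalFamily_apply (y : ι → E) (u : E →L[ℝ] ℝ) (k : ι) : evalFamily y u k = u (y k) := rfl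

variable [Fintype ι]

theorem evalFamily_sub (y y' : ι → E) : evalFamily (y - y') = evalFamily y - evalFamily y' := by
  ext; simp

theorem norm_evalFamily_apply_sq (y : ι → E) (u : E →L[ℝ] ℝ) :
    ‖evalFamily y u‖ ^ 2 = ∑ k, u (y k) ^ 2 := by
  simp [EuclideanSpace.real_norm_sq_eq]

noncomputable def covarianceOp (y : ι → E) : (E →L[ℝ] ℝ) →L[ℝ] E :=
  ∑ k, (ContinuousLinearMap.apply ℝ ℝ (y k)).smulRight (y k)

@[simp]
theorem covarianceOp_apply (y : ι → E) (u : E →L[ℝ] ℝ) :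
    covarianceOp y u = ∑ k, u (y k) • y k := by
  simp [covarianceOp]

theorem apply_covarianceOp_eq_inner (y : ι → E) (u v : E →L[ℝ] ℝ) :
    v (covarianceOp y u) = inner ℝ (evalFamily y u) (evalFamily y v) := by
  simp [PiLp.inner_apply, mul_comm]

theorem norm_evalFamily_apply_sq_le (y : ι → E) (u : E →L[ℝ] ℝ) :
    ‖evalFamily y u‖ ^ 2 ≤ ‖covarianceOp y‖ * ‖u‖ ^ 2 :=
  calc ‖evalFamily y u‖ ^ 2 = u (covarianceOp y u) := by
        rw [apply_covarianceOp_eq_inner, real_inner_self_eq_norm_sq]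
    _ ≤ ‖u‖ * ‖covarianceOp y u‖ := (le_abs_self _).trans (u.le_opNorm _)
    _ ≤ ‖u‖ * (‖covarianceOp y‖ * ‖u‖) := by gcongr; exact (covarianceOp y).le_opNorm u
    _ = ‖covarianceOp y‖ * ‖u‖ ^ 2 := by ring

theorem norm_covarianceOp (y : ι → E) : ‖covarianceOp y‖ = ‖evalFamily y‖ ^ 2 := by
  apply le_antisymm
  · refine ContinuousLinearMap.opNorm_le_bound _ (by positivity) fun u => ?_
    refine NormedSpace.norm_le_dual_bound ℝ _ (by positivity) fun v => ?_
    calc ‖v (covarianceOp y u)‖ ≤ ‖evalFamily y u‖ * ‖evalFamily y v‖ := by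
          rw [apply_covarianceOp_eq_inner]; exact norm_inner_le_norm _ _
      _ ≤ (‖evalFamily y‖ * ‖u‖) * (‖evalFamily y‖ * ‖v‖) := by
          gcongr <;> exact ContinuousLinearMap.le_opNorm _ _
      _ = ‖evalFamily y‖ ^ 2 * ‖u‖ * ‖v‖ := by ring
  · refine (Real.le_sqrt (norm_nonneg (evalFamily y)) (norm_nonneg (covarianceOp y))).1 ?_
    refine ContinuousLinearMap.opNorm_le_bound _ (by positivity) fun u => ?_
    simpa [Real.sqrt_mul', Real.sqrt_sq] using
      Real.sqrt_le_sqrt (norm_evalFamily_apply_sq_le y u)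

-- Instance search does not find `NormSMulClass` on this operator space by itself.
theorem norm_smul_covarianceOp (c : ℝ) (y : ι → E) :
    ‖c • covarianceOp y‖ = |c| * ‖evalFamily y‖ ^ 2 := by
  rw [← norm_covarianceOp, ← Real.norm_eq_abs]
  exact NormedSpace.toNormSMulClass.norm_smul c (covarianceOp y)

theorem sum_sq_sum_mul_le {κ : Type*} [Fintype κ] (W : EuclideanSpace ℝ (ι × κ)) (a : ι → ℝ) :
    ∑ k, (∑ j, W (j, k) * a j) ^ 2 ≤ ‖W‖ ^ 2 * ∑ j, a j ^ 2 := by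
  rw [EuclideanSpace.real_norm_sq_eq, Fintype.sum_prod_type, Finset.sum_comm, Finset.sum_mul]
  exact Finset.sum_le_sum fun k _ => Finset.sum_mul_sq_le_sq_mul_sq _ _ _

theorem norm_evalFamily_sum_smul_le {κ : Type*} [Fintype κ] (x : ι → E)
    (W : EuclideanSpace ℝ (ι × κ)) :
    ‖evalFamily (fun k => ∑ j, W (j, k) • x j)‖ ≤ ‖W‖ * ‖evalFamily x‖ := by
  refine ContinuousLinearMap.opNorm_le_bound _ (by positivity) fun u => ?_
  refine (pow_le_pow_iff_left₀ (norm_nonneg _) (by positivity) two_ne_zero).1 ?_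
  calc ‖evalFamily (fun k => ∑ j, W (j, k) • x j) u‖ ^ 2
      = ∑ k, (∑ j, W (j, k) * u (x j)) ^ 2 := by simp [norm_evalFamily_apply_sq]
    _ ≤ ‖W‖ ^ 2 * ‖evalFamily x u‖ ^ 2 := by
        rw [norm_evalFamily_apply_sq]; exact sum_sq_sum_mul_le W _
    _ ≤ ‖W‖ ^ 2 * (‖evalFamily x‖ * ‖u‖) ^ 2 := by gcongr; exact (evalFamily x).le_opNorm u
    _ = (‖W‖ * ‖evalFamily x‖ * ‖u‖) ^ 2 := by ring

end

theorem sample_covariance_sqrt_norm_lipschitz_general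
    {E : Type*} [NormedAddCommGroup E] [NormedSpace ℝ E]
    (N n : ℕ) (x : Fin N → E)
    (S : (E →L[ℝ] ℝ) →L[ℝ] E)
    (hS : ∀ u, S u = ∑ j, u (x j) • x j)
    (Shat : EuclideanSpace ℝ (Fin N × Fin n) → ((E →L[ℝ] ℝ) →L[ℝ] E))
    (hShat : ∀ Z u, Shat Z u =
      (n : ℝ)⁻¹ • ∑ km : Fin n,
        u (∑ j : Fin N, Z (j, km) • x j) • (∑ j : Fin N, Z (j, km) • x j)) :
    ∀ Z Z' : EuclideanSpace ℝ (Fin N × Fin n),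
      |Real.sqrt ‖Shat Z‖ - Real.sqrt ‖Shat Z'‖|
        ≤ (Real.sqrt ‖S‖ / Real.sqrt n) * ‖Z - Z'‖ := by
  intro Z Z'
  set X : EuclideanSpace ℝ (Fin N × Fin n) → Fin n → E := fun W k => ∑ j, W (j, k) • x j
  have hS_eq : S = covarianceOp x := ContinuousLinearMap.ext fun u => by rw [hS, covarianceOp_apply]
  have hsqrt : ∀ W, √‖Shat W‖ = ‖evalFamily (X W)‖ / √n := fun W => by
    have hShat_eq : Shat W = (n : ℝ)⁻¹ • covarianceOp (X W) :=
      ContinuousLinearMap.ext fun u => by rw [hShat, smul_apply, covarianceOp_apply]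
    rw [hShat_eq, norm_smul_covarianceOp, Real.sqrt_mul' _ (sq_nonneg _),
      Real.sqrt_sq (norm_nonneg (evalFamily (X W))), abs_inv, Nat.abs_cast, Real.sqrt_inv,
      inv_mul_eq_div]
  have hX_sub : X Z - X Z' = X (Z - Z') := by
    ext k; simp [X, sub_smul, Finset.sum_sub_distrib]
  calc |√‖Shat Z‖ - √‖Shat Z'‖| = |‖evalFamily (X Z)‖ - ‖evalFamily (X Z')‖| / √n := by
        rw [hsqrt, hsqrt, ← sub_div, abs_div, abs_of_nonneg (Real.sqrt_nonneg _)]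
    _ ≤ ‖evalFamily (X (Z - Z'))‖ / √n := by
        rw [← hX_sub, evalFamily_sub]; gcongr; exact abs_norm_sub_norm_le (evalFamily (X Z)) _
    _ ≤ ‖Z - Z'‖ * ‖evalFamily x‖ / √n := by gcongr; exact norm_evalFamily_sum_smul_le x _
    _ = √‖S‖ / √n * ‖Z - Z'‖ := by
        rw [hS_eq, norm_covarianceOp, Real.sqrt_sq (norm_nonneg (evalFamily x))]; ring

/-- The map `Z ↦ ‖Σ̂⁽ᴺ⁾(Z)‖^{1/2}` is Lipschitz on `ℝ^{N×n}` (Euclidean norm) with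
constant `‖Σ⁽ᴺ⁾‖^{1/2}/√n`. -/
theorem sample_covariance_sqrt_norm_lipschitz
    {E : Type*} [NormedAddCommGroup E] [NormedSpace ℝ E]
    (N n : ℕ) (hn : 0 < n) (x : Fin N → E)
    (S : (E →L[ℝ] ℝ) →L[ℝ] E)
    (hS : ∀ u, S u = ∑ j, u (x j) • x j)
    (Shat : EuclideanSpace ℝ (Fin N × Fin n) → ((E →L[ℝ] ℝ) →L[ℝ] E))
    (hShat : ∀ Z u, Shat Z u =
      (n : ℝ)⁻¹ • ∑ km : Fin n,
        u (∑ j : Fin N, Z (j, km) • x j) • (∑ j : Fin N, Z (j, km) • x j)) :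
    ∀ Z Z' : EuclideanSpace ℝ (Fin N × Fin n),
      |Real.sqrt ‖Shat Z‖ - Real.sqrt ‖Shat Z'‖|
        ≤ (Real.sqrt ‖S‖ / Real.sqrt n) * ‖Z - Z'‖ :=
  sample_covariance_sqrt_norm_lipschitz_general N n x S hS Shat hShat
end

section
/- Let u ∈ ℝ^d be a unit vector with d ≥ 4·64. There exists a subset B of the binary cube {−1,1}^d such that: (i) card(B) ≥ e^{d/8}/2; (ii) |⟨u,ω⟩| < 2 for all ω ∈ B; (iii) the Hamming distance satisfies h(ω,ω') ≥ d/4 for all distinct ω, ω' ∈ B. -/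
/-!
Since the coordinates of a uniform point `ω` of the cube `{-1, 1}^d` are orthonormal in `L²`,
`⟨u, ω⟩` has second moment `‖u‖² = 1`, so by Chebyshev at least `3/4` of the cube satisfies
`|⟨u, ω⟩| < 2`. A maximal `d/4`-separated subset of these good points covers them by Hamming
balls of radius `d/4`, and each such ball holds at most `2^d e^{-d/8}` points by the Chernoff
bound for `Bin(d, 1/2)`; hence the separated set has at least `(3/4) e^{d/8}` points.
-/

open Finset Real
open scoped SetRel

lemma SetRel.exists_isSeparated_card_le_mul {α : Type*} [DecidableEq α] (U : SetRel α α)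
    [U.IsRefl] [U.IsSymm] [∀ y, DecidablePred (· ~[U] y)] (s : Finset α) (m : ℕ)
    (hm : ∀ y ∈ s, #{x ∈ s | x ~[U] y} ≤ m) :
    ∃ N ⊆ s, U.IsSeparated (N : Set α) ∧ #s ≤ #N * m := by
  have hfin : {N : Set α | N ⊆ s ∧ U.IsSeparated N}.Finite :=
    s.finite_toSet.finite_subsets.subset fun N hN => hN.1
  obtain ⟨N, -, hmax⟩ := hfin.exists_le_maximal (a := ∅) ⟨Set.empty_subset _, .empty⟩
  have hNfin : N.Finite := s.finite_toSet.subset hmax.1.1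
  have hcover : IsCover U s N := .of_maximal_isSeparated hmax
  refine ⟨hNfin.toFinset, by simpa using hmax.1.1, by simpa using hmax.1.2, ?_⟩
  calc #s ≤ #(hNfin.toFinset.biUnion fun y => {x ∈ s | x ~[U] y}) := by
        refine card_le_card fun x hx => ?_
        obtain ⟨y, hy, hxy⟩ := hcover hx
        exact mem_biUnion.2 ⟨y, hNfin.mem_toFinset.2 hy, mem_filter.2 ⟨hx, hxy⟩⟩
    _ ≤ ∑ y ∈ hNfin.toFinset, #{x ∈ s | x ~[U] y} := card_biUnion_le
    _ ≤ #hNfin.toFinset * m := sum_le_card_nsmul _ _ _ fun y hy =>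
        hm y (hmax.1.1 (hNfin.mem_toFinset.1 hy))

def hammingRel {ι : Type*} {β : ι → Type*} [Fintype ι] [∀ i, DecidableEq (β i)] (r : ℕ) :
    SetRel (∀ i, β i) (∀ i, β i) :=
  {p | hammingDist p.1 p.2 ≤ r}

section Hamming

variable {ι : Type*} {β : ι → Type*} [Fintype ι] [∀ i, DecidableEq (β i)] (r : ℕ)

instance : (hammingRel (β := β) r).IsRefl := ⟨fun x => by simp [hammingRel]⟩

instance : (hammingRel (β := β) r).IsSymm :=
  ⟨fun x y h => by simpa [hammingRel, hammingDist_comm] using h⟩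

instance (y : ∀ i, β i) : DecidablePred (· ~[hammingRel r] y) := fun x =>
  inferInstanceAs (Decidable (hammingDist x y ≤ r))

end Hamming

noncomputable def signCube (ι : Type*) [Fintype ι] [DecidableEq ι] : Finset (ι → ℝ) :=
  Fintype.piFinset fun _ => {1, -1}

section Cube

variable {ι : Type*} [Fintype ι] [DecidableEq ι]

lemma mem_signCube {ω : ι → ℝ} : ω ∈ signCube ι ↔ ∀ j, ω j = 1 ∨ ω j = -1 := by
  simp [signCube]

lemma card_signCube : #(signCube ι) = 2 ^ Fintype.card ι := by
  simp [signCube, card_pair (show (1 : ℝ) ≠ -1 by norm_num)]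

lemma sum_signCube_mul (j k : ι) :
    ∑ ω ∈ signCube ι, ω j * ω k = if j = k then (2 : ℝ) ^ Fintype.card ι else 0 := by
  set f : ι → ℝ → ℝ := fun i a => (if i = j then a else 1) * (if i = k then a else 1)
  have hprod (ω : ι → ℝ) : ω j * ω k = ∏ i, f i (ω i) := by
    rw [prod_mul_distrib, prod_ite_eq', prod_ite_eq']
    simp
  simp_rw [hprod]
  rw [signCube, ← prod_univ_sum]
  split_ifs with hjk
  · subst hjk
    rw [← card_univ, ← prod_const]
    refine prod_congr rfl fun i _ => ?_
    by_cases hi : i = j <;> simp [f, hi] <;> norm_num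
  · refine prod_eq_zero (mem_univ j) ?_
    simp only [f, if_pos, if_neg hjk, mul_one]
    rw [sum_pair (by norm_num)]
    norm_num

lemma sum_signCube_inner_sq (u : ι → ℝ) :
    ∑ ω ∈ signCube ι, (∑ j, u j * ω j) ^ 2 = 2 ^ Fintype.card ι * ∑ j, u j ^ 2 := by
  calc ∑ ω ∈ signCube ι, (∑ j, u j * ω j) ^ 2
      = ∑ j, ∑ k, u j * u k * ∑ ω ∈ signCube ι, ω j * ω k := by
        simp_rw [sq, sum_mul_sum, mul_sum]
        rw [sum_comm]
        refine sum_congr rfl fun j _ => ?_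
        rw [sum_comm]
        exact sum_congr rfl fun k _ => sum_congr rfl fun ω _ => by ring
    _ = 2 ^ Fintype.card ι * ∑ j, u j ^ 2 := by
        simp [sum_signCube_mul, mul_sum, sq, mul_comm]

lemma le_card_filter_signCube_abs_inner_lt_two (u : ι → ℝ) (hu : ∑ j, u j ^ 2 = 1) :
    3 / 4 * 2 ^ Fintype.card ι ≤ (#{ω ∈ signCube ι | |∑ j, u j * ω j| < 2} : ℝ) := by
  set f : (ι → ℝ) → ℝ := fun ω => ∑ j, u j * ω j
  have hfar : 4 * (#{ω ∈ signCube ι | ¬ |f ω| < 2} : ℝ) ≤ 2 ^ Fintype.card ι :=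
    calc 4 * (#{ω ∈ signCube ι | ¬ |f ω| < 2} : ℝ)
        = ∑ ω ∈ signCube ι with ¬ |f ω| < 2, 2 ^ 2 := by rw [sum_const, nsmul_eq_mul]; ring
      _ ≤ ∑ ω ∈ signCube ι with ¬ |f ω| < 2, f ω ^ 2 := sum_le_sum fun ω hω => by
          simpa only [sq_abs] using pow_le_pow_left₀ (by norm_num) (not_lt.1 (mem_filter.1 hω).2) 2
      _ ≤ ∑ ω ∈ signCube ι, f ω ^ 2 :=
          sum_le_sum_of_subset_of_nonneg (filter_subset _ _) fun _ _ _ => sq_nonneg _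
      _ = 2 ^ Fintype.card ι := by rw [sum_signCube_inner_sq, hu, mul_one]
  have hsplit : (#{ω ∈ signCube ι | |f ω| < 2} : ℝ) + #{ω ∈ signCube ι | ¬ |f ω| < 2}
      = 2 ^ Fintype.card ι := by
    exact_mod_cast (card_filter_add_card_filter_not _).trans card_signCube
  linarith

lemma card_filter_signCube_hammingDist_le {y : ι → ℝ} (hy : y ∈ signCube ι) (r : ℕ) :
    #{x ∈ signCube ι | hammingDist x y ≤ r} ≤ ∑ k ∈ range (r + 1), (Fintype.card ι).choose k := by
  have hinj : Set.InjOn (fun x : ι → ℝ => ({j | x j ≠ y j} : Finset ι))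
      ({x ∈ signCube ι | hammingDist x y ≤ r} : Finset (ι → ℝ)) := by
    intro x hx x' hx' h
    funext j
    have hj : x j ≠ y j ↔ x' j ≠ y j := by simpa using congrArg (j ∈ ·) h
    have := mem_signCube.1 (mem_filter.1 hx).1 j
    have := mem_signCube.1 (mem_filter.1 hx').1 j
    have := mem_signCube.1 hy j
    grind
  calc #{x ∈ signCube ι | hammingDist x y ≤ r}
      ≤ #((range (r + 1)).biUnion fun k => powersetCard k (univ : Finset ι)) := by
        refine card_le_card_of_injOn _ (fun x hx => ?_) hinj
        refine mem_biUnion.2 ⟨hammingDist x y, ?_, mem_powersetCard.2 ⟨subset_univ _, rfl⟩⟩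
        exact mem_range.2 (Nat.lt_succ_of_le (mem_filter.1 hx).2)
    _ ≤ ∑ k ∈ range (r + 1), #(powersetCard k (univ : Finset ι)) := card_biUnion_le
    _ = ∑ k ∈ range (r + 1), (Fintype.card ι).choose k := by simp

end Cube

lemma sum_range_choose_mul_pow_le {t : ℝ} (ht₀ : 0 ≤ t) (ht₁ : t ≤ 1) {n r : ℕ} (hr : r ≤ n) :
    (∑ k ∈ range (r + 1), (n.choose k : ℝ)) * t ^ r ≤ (1 + t) ^ n := by
  calc (∑ k ∈ range (r + 1), (n.choose k : ℝ)) * t ^ r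
      ≤ ∑ k ∈ range (r + 1), t ^ k * n.choose k := by
        rw [sum_mul]
        refine sum_le_sum fun k hk => ?_
        rw [mul_comm]
        exact mul_le_mul_of_nonneg_right
          (pow_le_pow_of_le_one ht₀ ht₁ (Nat.lt_succ_iff.1 (mem_range.1 hk))) (Nat.cast_nonneg _)
    _ ≤ ∑ k ∈ range (n + 1), t ^ k * n.choose k :=
        sum_le_sum_of_subset_of_nonneg (range_subset_range.2 (by omega)) fun _ _ _ => by positivity
    _ = (1 + t) ^ n := by simp [add_comm, add_pow]

/-- The Chernoff bound at `t = 1/3`, with `(4/3)^8 · 9 · e ≤ 2^8` because `e ≤ 729/256`. -/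
lemma sum_range_choose_mul_exp_le (n : ℕ) :
    (∑ k ∈ range (n / 4 + 1), (n.choose k : ℝ)) * exp (n / 8) ≤ 2 ^ n := by
  have hchernoff := sum_range_choose_mul_pow_le (t := 1 / 3) (by norm_num) (by norm_num)
    (Nat.div_le_self n 4)
  have he : (4 / 3 : ℝ) ^ 8 * 9 * exp 1 ≤ 2 ^ 8 := by
    have := exp_one_lt_d9
    norm_num at this ⊢
    linarith
  have hbase : (4 / 3 : ℝ) ^ n * 3 ^ (n / 4) * exp (n / 8) ≤ 2 ^ n := by
    refine (pow_le_pow_iff_left₀ (by positivity) (by positivity) (by norm_num : 8 ≠ 0)).1 ?_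
    have h3 : ((3 : ℝ) ^ (n / 4)) ^ 8 ≤ 9 ^ n := by
      rw [← pow_mul, show (9 : ℝ) = 3 ^ 2 by norm_num, ← pow_mul]
      exact pow_le_pow_right₀ (by norm_num) (by omega)
    have h43 : ((4 / 3 : ℝ) ^ n) ^ 8 = ((4 / 3) ^ 8) ^ n := by rw [← pow_mul, ← pow_mul, mul_comm]
    have hexp : exp (n / 8) ^ 8 = exp 1 ^ n := by
      rw [← exp_nat_mul, ← exp_nat_mul]
      congr 1
      push_cast
      ring
    calc ((4 / 3 : ℝ) ^ n * 3 ^ (n / 4) * exp (n / 8)) ^ 8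
        = ((4 / 3) ^ 8) ^ n * (3 ^ (n / 4)) ^ 8 * exp 1 ^ n := by rw [mul_pow, mul_pow, h43, hexp]
      _ ≤ ((4 / 3) ^ 8) ^ n * 9 ^ n * exp 1 ^ n := by gcongr
      _ = ((4 / 3) ^ 8 * 9 * exp 1) ^ n := by rw [mul_pow, mul_pow]
      _ ≤ (2 ^ 8) ^ n := by gcongr
      _ = (2 ^ n) ^ 8 := by rw [← pow_mul, ← pow_mul, mul_comm]
  calc (∑ k ∈ range (n / 4 + 1), (n.choose k : ℝ)) * exp (n / 8)
      ≤ (4 / 3) ^ n * 3 ^ (n / 4) * exp (n / 8) := by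
        gcongr
        rw [← le_div_iff₀ (by positivity)] at hchernoff
        convert hchernoff using 1
        rw [one_div, inv_pow, div_inv_eq_mul]
        norm_num
    _ ≤ 2 ^ n := hbase

lemma exists_isSeparated_hammingRel_card_mul_exp_le {ι : Type*} [Fintype ι] [DecidableEq ι]
    {s : Finset (ι → ℝ)} (hs : s ⊆ signCube ι) :
    ∃ N ⊆ s, (hammingRel (Fintype.card ι / 4)).IsSeparated (N : Set (ι → ℝ)) ∧
      #s * exp (Fintype.card ι / 8) ≤ #N * 2 ^ Fintype.card ι := by
  set n := Fintype.card ι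
  obtain ⟨N, hNs, hsep, hcard⟩ := (hammingRel (n / 4)).exists_isSeparated_card_le_mul s
    (∑ k ∈ range (n / 4 + 1), n.choose k) fun y hy =>
      (card_le_card (filter_subset_filter _ hs)).trans
        (card_filter_signCube_hammingDist_le (hs hy) (n / 4))
  have hcard' : (#s : ℝ) ≤ #N * ∑ k ∈ range (n / 4 + 1), (n.choose k : ℝ) := by
    exact_mod_cast hcard
  refine ⟨N, hNs, hsep, ?_⟩
  calc #s * exp (n / 8)
      ≤ #N * (∑ k ∈ range (n / 4 + 1), (n.choose k : ℝ)) * exp (n / 8) := by gcongr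
    _ = #N * ((∑ k ∈ range (n / 4 + 1), (n.choose k : ℝ)) * exp (n / 8)) := mul_assoc _ _ _
    _ ≤ #N * 2 ^ n := by gcongr; exact sum_range_choose_mul_exp_le n

theorem varshamov_gilbert_subset_general
    (d : ℕ) (u : Fin d → ℝ) (hu : ∑ j, (u j) ^ 2 = 1) :
    ∃ B : Finset (Fin d → ℝ),
      (∀ ω ∈ B, ∀ j, ω j = 1 ∨ ω j = -1) ∧
      Real.exp ((d : ℝ) / 8) / 2 ≤ (B.card : ℝ) ∧
      (∀ ω ∈ B, |∑ j, u j * ω j| < 2) ∧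
      (∀ ω ∈ B, ∀ ω' ∈ B, ω ≠ ω' →
        (d : ℝ) / 4 ≤ ((Finset.univ.filter fun j => ω j ≠ ω' j).card : ℝ)) := by
  set good := {ω ∈ signCube (Fin d) | |∑ j, u j * ω j| < 2}
  obtain ⟨B, hBgood, hBsep, hB⟩ :=
    exists_isSeparated_hammingRel_card_mul_exp_le (filter_subset _ _ : good ⊆ _)
  have hgood := le_card_filter_signCube_abs_inner_lt_two u hu
  simp only [Fintype.card_fin] at hB hBsep hgood
  refine ⟨B, fun ω hω => mem_signCube.1 (mem_filter.1 (hBgood hω)).1, ?_,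
    fun ω hω => (mem_filter.1 (hBgood hω)).2, fun ω hω ω' hω' hne => ?_⟩
  · have : 3 / 4 * exp (d / 8) * 2 ^ d ≤ #B * 2 ^ d := by
      nlinarith [exp_pos (d / 8 : ℝ)]
    have := le_of_mul_le_mul_right this (by positivity)
    linarith [exp_pos (d / 8 : ℝ)]
  · have hfar : ¬ hammingDist ω ω' ≤ d / 4 := hBsep hω hω' hne
    change (d : ℝ) / 4 ≤ hammingDist ω ω'
    rw [div_le_iff₀ (by norm_num)]
    exact_mod_cast (by omega : d ≤ hammingDist ω ω' * 4)

/-- Varshamov–Gilbert type bound: for a unit vector `u ∈ ℝ^d` with `d ≥ 4·64` there is a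
subset `B` of the binary cube `{−1,1}^d` with `card(B) ≥ e^{d/8}/2`, `|⟨u,ω⟩| < 2` for all
`ω ∈ B`, and pairwise Hamming distances at least `d/4`. -/
theorem varshamov_gilbert_subset
    (d : ℕ) (hd : 4 * 64 ≤ d) (u : Fin d → ℝ) (hu : ∑ j, (u j) ^ 2 = 1) :
    ∃ B : Finset (Fin d → ℝ),
      (∀ ω ∈ B, ∀ j, ω j = 1 ∨ ω j = -1) ∧
      Real.exp ((d : ℝ) / 8) / 2 ≤ (B.card : ℝ) ∧
      (∀ ω ∈ B, |∑ j, u j * ω j| < 2) ∧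
      (∀ ω ∈ B, ∀ ω' ∈ B, ω ≠ ω' →
        (d : ℝ) / 4 ≤ ((Finset.univ.filter fun j => ω j ≠ ω' j).card : ℝ)) :=
  varshamov_gilbert_subset_general d u hu
end

section
/- For ω ∈ {−1,1}^d and a fixed unit vector u ∈ ℝ^d, let t_ω := ε·ω/√d + √(1−ε²)·u and θ_ω := t_ω/‖t_ω‖, where 0 < ε and ε/√d ≤ 1/8 and |⟨u,ω⟩| < 2 for all ω considered. Then for all such ω, ω': (ε/√d)(√h(ω,ω') − 4) ≤ ‖θ_ω − θ_{ω'}‖ ≤ (8ε/√d)·√h(ω,ω'), where h is the Hamming distance. Moreover, if in addition h(ω,ω') ≥ d/4 and d ≥ 4·64, then ‖θ_ω − θ_{ω'}‖ ≥ (ε/(2√d))·√h(ω,ω') ≥ ε/4. -/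
/-!
Writing `e = ε/√d`, the vector `t_ω` satisfies `‖t_ω‖² = 1 + 2e√(1-ε²)⟨ω,u⟩`, so `|‖t_ω‖ - 1| ≤ 4e`,
and `t_ω - t_ω' = e(ω - ω')` has norm `2e√h`. Normalising two vectors whose norms are within
`δ < 1` of `1` changes their distance by at most a factor and an additive error:
`‖x - y‖/2 - δ ≤ ‖x/‖x‖ - y/‖y‖‖ ≤ 4‖x - y‖` (the upper bound needs `δ ≤ 1/2`). With `δ = 4e` this
gives both bounds, and when `√h ≥ √d/2 ≥ 8` the additive error is absorbed.
-/

open NormedSpace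

section Normalize

variable {V : Type*} [NormedAddCommGroup V] [NormedSpace ℝ V]

theorem normalize_sub_normalize (x y : V) :
    normalize x - normalize y = ‖x‖⁻¹ • (x - y) + (‖x‖⁻¹ - ‖y‖⁻¹) • y := by
  simp only [NormedSpace.normalize, smul_sub, sub_smul, sub_add_sub_cancel]

theorem norm_inv_norm_sub_inv_norm_smul_le {x : V} (hx : x ≠ 0) (y : V) :
    ‖(‖x‖⁻¹ - ‖y‖⁻¹) • y‖ ≤ |‖x‖ - ‖y‖| / ‖x‖ := by
  rcases eq_or_ne y 0 with rfl | hy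
  · simp only [smul_zero, norm_zero]
    positivity
  have hxy : 0 < ‖x‖ * ‖y‖ := by positivity
  rw [norm_smul, Real.norm_eq_abs, inv_sub_inv (norm_ne_zero_iff.2 hx) (norm_ne_zero_iff.2 hy),
    abs_div, abs_of_pos hxy, abs_sub_comm, div_mul_eq_mul_div,
    mul_div_mul_right _ _ (norm_ne_zero_iff.2 hy)]

theorem norm_normalize_sub_normalize_le {x : V} (hx : x ≠ 0) (y : V) :
    ‖normalize x - normalize y‖ ≤ 2 * ‖x - y‖ / ‖x‖ := by
  calc ‖normalize x - normalize y‖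
      ≤ ‖‖x‖⁻¹ • (x - y)‖ + ‖(‖x‖⁻¹ - ‖y‖⁻¹) • y‖ := by
        rw [normalize_sub_normalize]; exact norm_add_le _ _
    _ ≤ ‖x - y‖ / ‖x‖ + ‖x - y‖ / ‖x‖ := by
        gcongr
        · rw [norm_smul, norm_inv, norm_norm, inv_mul_eq_div]
        · exact (norm_inv_norm_sub_inv_norm_smul_le hx y).trans
            (by gcongr; exact abs_norm_sub_norm_le x y)
    _ = 2 * ‖x - y‖ / ‖x‖ := by ring

theorem sub_abs_div_le_norm_normalize_sub_normalize {x : V} (hx : x ≠ 0) (y : V) :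
    (‖x - y‖ - |‖x‖ - ‖y‖|) / ‖x‖ ≤ ‖normalize x - normalize y‖ := by
  have h := norm_sub_norm_le (‖x‖⁻¹ • (x - y)) (-((‖x‖⁻¹ - ‖y‖⁻¹) • y))
  rw [sub_neg_eq_add, ← normalize_sub_normalize, norm_neg, norm_smul, norm_inv, norm_norm,
    inv_mul_eq_div] at h
  rw [sub_div]
  linarith [norm_inv_norm_sub_inv_norm_smul_le hx y]

theorem norm_normalize_sub_normalize_le_of_half_le_norm {x : V} (hx : 1 / 2 ≤ ‖x‖) (y : V) :
    ‖normalize x - normalize y‖ ≤ 4 * ‖x - y‖ := by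
  have hx0 : x ≠ 0 := norm_pos_iff.1 (by linarith)
  refine (norm_normalize_sub_normalize_le hx0 y).trans ?_
  rw [div_le_iff₀ (by linarith)]
  nlinarith [norm_nonneg (x - y)]

theorem le_norm_normalize_sub_normalize_of_abs_norm_sub_one_le {x y : V} {δ : ℝ} (hδ : δ < 1)
    (hx : |‖x‖ - 1| ≤ δ) (hy : |‖y‖ - 1| ≤ δ) :
    ‖x - y‖ / 2 - δ ≤ ‖normalize x - normalize y‖ := by
  rw [abs_le] at hx hy
  rcases le_or_gt (‖x - y‖) (2 * δ) with hsmall | hlarge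
  · linarith [norm_nonneg (normalize x - normalize y)]
  have hx0 : x ≠ 0 := norm_pos_iff.1 (by linarith)
  have hxy : |‖x‖ - ‖y‖| ≤ 2 * δ := by rw [abs_le]; constructor <;> linarith
  calc ‖x - y‖ / 2 - δ = (‖x - y‖ - 2 * δ) / 2 := by ring
    _ ≤ (‖x - y‖ - |‖x‖ - ‖y‖|) / ‖x‖ :=
        div_le_div₀ (by linarith) (by linarith) (norm_pos_iff.2 hx0) (by linarith)
    _ ≤ ‖normalize x - normalize y‖ := sub_abs_div_le_norm_normalize_sub_normalize hx0 y

end Normalize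

theorem abs_sub_one_le_abs_sq_sub_one {x : ℝ} (hx : 0 ≤ x) : |x - 1| ≤ |x ^ 2 - 1| := by
  rw [show x ^ 2 - 1 = (x - 1) * (x + 1) by ring, abs_mul, abs_of_pos (by linarith : 0 < x + 1)]
  nlinarith [abs_nonneg (x - 1)]

section Perturbation

variable {E : Type*} [NormedAddCommGroup E] [InnerProductSpace ℝ E]

theorem norm_add_sqrt_one_sub_sq_smul_sq {u v : E} {ε : ℝ} (hu : ‖u‖ = 1) (hv : ‖v‖ = ε)
    (hε : ε ≤ 1) :
    ‖v + √(1 - ε ^ 2) • u‖ ^ 2 = 1 + 2 * √(1 - ε ^ 2) * inner ℝ v u := by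
  have hε0 : 0 ≤ ε := hv ▸ norm_nonneg v
  have hs : √(1 - ε ^ 2) ^ 2 = 1 - ε ^ 2 := Real.sq_sqrt (by nlinarith)
  rw [norm_add_sq_real, norm_smul, real_inner_smul_right, hu, hv, Real.norm_eq_abs,
    abs_of_nonneg (Real.sqrt_nonneg _)]
  linear_combination hs

theorem abs_norm_add_sqrt_one_sub_sq_smul_sub_one_le {u v : E} {ε : ℝ} (hu : ‖u‖ = 1)
    (hv : ‖v‖ = ε) (hε : ε ≤ 1) :
    |‖v + √(1 - ε ^ 2) • u‖ - 1| ≤ 2 * |inner ℝ v u| := by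
  have hs : √(1 - ε ^ 2) ≤ 1 := Real.sqrt_le_one.2 (by nlinarith [norm_nonneg v])
  refine (abs_sub_one_le_abs_sq_sub_one (norm_nonneg _)).trans ?_
  rw [norm_add_sqrt_one_sub_sq_smul_sq hu hv hε, add_sub_cancel_left, abs_mul, abs_mul,
    abs_two, abs_of_nonneg (Real.sqrt_nonneg _)]
  nlinarith [abs_nonneg (inner ℝ v u)]

end Perturbation

namespace EuclideanSpace

variable {ι : Type*} [Fintype ι]

theorem norm_eq_sqrt_card_of_sign {w : EuclideanSpace ℝ ι} (hw : ∀ j, w j = 1 ∨ w j = -1) :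
    ‖w‖ = √(Fintype.card ι) := by
  have hsq : ∀ j, w j ^ 2 = 1 := fun j => by rcases hw j with h | h <;> simp [h]
  rw [← Real.sqrt_sq (norm_nonneg w), real_norm_sq_eq]
  simp [hsq]

theorem norm_sub_eq_two_mul_sqrt_hammingDist_of_sign {w w' : EuclideanSpace ℝ ι}
    (hw : ∀ j, w j = 1 ∨ w j = -1) (hw' : ∀ j, w' j = 1 ∨ w' j = -1) :
    ‖w - w'‖ = 2 * √(hammingDist w.ofLp w'.ofLp) := by
  classical
  have hterm : ∀ j, (w j - w' j) ^ 2 = 4 * if w j ≠ w' j then 1 else 0 := by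
    intro j
    rcases hw j with h | h <;> rcases hw' j with h' | h' <;> norm_num [h, h']
  rw [norm_eq]
  simp only [PiLp.sub_apply, Real.norm_eq_abs, sq_abs, hterm]
  rw [← Finset.mul_sum, Finset.sum_boole, Real.sqrt_mul (by norm_num),
    show (4 : ℝ) = 2 ^ 2 by norm_num, Real.sqrt_sq (by norm_num)]
  rfl

theorem abs_norm_sign_perturbation_sub_one_le {u : EuclideanSpace ℝ ι} (hu : ‖u‖ = 1) {ε : ℝ}
    (hε : 0 ≤ ε) (hε1 : ε ≤ 1) {w : EuclideanSpace ℝ ι} (hw : ∀ j, w j = 1 ∨ w j = -1) :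
    |‖(ε / √(Fintype.card ι)) • w + √(1 - ε ^ 2) • u‖ - 1|
      ≤ 2 * (ε / √(Fintype.card ι)) * |∑ j, u j * w j| := by
  have : Nonempty ι := by
    by_contra hempty
    rw [not_nonempty_iff] at hempty
    simp [Subsingleton.elim u 0] at hu
  have hcard : 0 < √(Fintype.card ι) := Real.sqrt_pos.2 (by exact_mod_cast Fintype.card_pos)
  have hv : ‖(ε / √(Fintype.card ι)) • w‖ = ε := by
    rw [norm_smul, norm_eq_sqrt_card_of_sign hw, Real.norm_eq_abs, abs_of_nonneg (by positivity),
      div_mul_cancel₀ _ hcard.ne']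
  refine (abs_norm_add_sqrt_one_sub_sq_smul_sub_one_le hu hv hε1).trans_eq ?_
  rw [real_inner_smul_left, inner_eq_star_dotProduct, star_trivial, abs_mul,
    abs_of_nonneg (by positivity), mul_assoc]
  rfl

end EuclideanSpace

theorem theta_omega_separation_general
    (d : ℕ) (u : EuclideanSpace ℝ (Fin d)) (hu : ‖u‖ = 1)
    (ε : ℝ) (hε : 0 < ε) (hε1 : ε ≤ 1) (hεd : ε / Real.sqrt d ≤ 1 / 8)
    (ω ω' : EuclideanSpace ℝ (Fin d))
    (hω : ∀ j, ω j = 1 ∨ ω j = -1) (hω' : ∀ j, ω' j = 1 ∨ ω' j = -1)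
    (huω : |∑ j, u j * ω j| < 2) (huω' : |∑ j, u j * ω' j| < 2) :
    let t : EuclideanSpace ℝ (Fin d) → EuclideanSpace ℝ (Fin d) :=
      fun w => (ε / Real.sqrt d) • w + Real.sqrt (1 - ε ^ 2) • u
    let θ : EuclideanSpace ℝ (Fin d) → EuclideanSpace ℝ (Fin d) :=
      fun w => ‖t w‖⁻¹ • t w
    let h : ℝ := ((Finset.univ.filter fun j => ω j ≠ ω' j).card : ℝ)
    (ε / Real.sqrt d) * (Real.sqrt h - 4) ≤ ‖θ ω - θ ω'‖
    ∧ ‖θ ω - θ ω'‖ ≤ (8 * ε / Real.sqrt d) * Real.sqrt h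
    ∧ ((d : ℝ) / 4 ≤ h → 4 * 64 ≤ d →
        (ε / (2 * Real.sqrt d)) * Real.sqrt h ≤ ‖θ ω - θ ω'‖ ∧ ε / 4 ≤ ‖θ ω - θ ω'‖) := by
  intro t θ h
  have hθ : θ ω - θ ω' = normalize (t ω) - normalize (t ω') := rfl
  have he0 : 0 ≤ ε / √d := by positivity
  have hdist : ‖t ω - t ω'‖ = 2 * (ε / √d) * √h := by
    have hh : h = hammingDist ω.ofLp ω'.ofLp := rfl
    rw [show t ω - t ω' = (ε / √d) • (ω - ω') by simp only [t, smul_sub, add_sub_add_right_eq_sub],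
      norm_smul, EuclideanSpace.norm_sub_eq_two_mul_sqrt_hammingDist_of_sign hω hω',
      Real.norm_eq_abs, abs_of_nonneg he0, hh]
    ring
  have hnear : ∀ w : EuclideanSpace ℝ (Fin d), (∀ j, w j = 1 ∨ w j = -1) →
      |∑ j, u j * w j| < 2 → |‖t w‖ - 1| ≤ 4 * (ε / √d) := fun w hw huw => by
    have := EuclideanSpace.abs_norm_sign_perturbation_sub_one_le hu hε.le hε1 hw
    simp only [Fintype.card_fin] at this
    nlinarith
  have hupper := norm_normalize_sub_normalize_le_of_half_le_norm
    (by linarith [(abs_le.1 (hnear ω hω huω)).1] : 1 / 2 ≤ ‖t ω‖) (t ω')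
  have hlower := le_norm_normalize_sub_normalize_of_abs_norm_sub_one_le
    (by linarith : 4 * (ε / √d) < 1) (hnear ω hω huω) (hnear ω' hω' huω')
  rw [hθ, mul_div_assoc]
  refine ⟨by linarith, by linarith, fun hhalf hd => ?_⟩
  have hsqrtd : 16 ≤ √d := Real.le_sqrt_of_sq_le (by norm_num; exact_mod_cast hd)
  have hsqrth : √d / 2 ≤ √h := by
    simpa [Real.sqrt_div', show √(4 : ℝ) = 2 by norm_num] using Real.sqrt_le_sqrt hhalf
  have hmid : ε / (2 * √d) * √h ≤ ε / √d * (√h - 4) := by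
    have hhalved : ε / (2 * √d) * √h = ε / √d * √h / 2 := by ring
    nlinarith [mul_le_mul_of_nonneg_left (by linarith : (8 : ℝ) ≤ √h) he0]
  have hquarter : ε / 4 ≤ ε / (2 * √d) * √h :=
    calc ε / 4 = ε / (2 * √d) * (√d / 2) := by field_simp; ring
      _ ≤ ε / (2 * √d) * √h := by gcongr
  exact ⟨by linarith, by linarith⟩

/-- Separation of the perturbed unit vectors `θ_ω = t_ω/‖t_ω‖`, `t_ω = εω/√d + √(1−ε²)u`:
`(ε/√d)(√h(ω,ω') − 4) ≤ ‖θ_ω − θ_{ω'}‖ ≤ (8ε/√d)√h(ω,ω')`, and if moreover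
`h(ω,ω') ≥ d/4` and `d ≥ 4·64`, then
`‖θ_ω − θ_{ω'}‖ ≥ (ε/(2√d))√h(ω,ω') ≥ ε/4`. -/
theorem theta_omega_separation
    (d : ℕ) (hd : 1 ≤ d) (u : EuclideanSpace ℝ (Fin d)) (hu : ‖u‖ = 1)
    (ε : ℝ) (hε : 0 < ε) (hε1 : ε ≤ 1) (hεd : ε / Real.sqrt d ≤ 1 / 8)
    (ω ω' : EuclideanSpace ℝ (Fin d))
    (hω : ∀ j, ω j = 1 ∨ ω j = -1) (hω' : ∀ j, ω' j = 1 ∨ ω' j = -1)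
    (huω : |∑ j, u j * ω j| < 2) (huω' : |∑ j, u j * ω' j| < 2) :
    let t : EuclideanSpace ℝ (Fin d) → EuclideanSpace ℝ (Fin d) :=
      fun w => (ε / Real.sqrt d) • w + Real.sqrt (1 - ε ^ 2) • u
    let θ : EuclideanSpace ℝ (Fin d) → EuclideanSpace ℝ (Fin d) :=
      fun w => ‖t w‖⁻¹ • t w
    let h : ℝ := ((Finset.univ.filter fun j => ω j ≠ ω' j).card : ℝ)
    (ε / Real.sqrt d) * (Real.sqrt h - 4) ≤ ‖θ ω - θ ω'‖
    ∧ ‖θ ω - θ ω'‖ ≤ (8 * ε / Real.sqrt d) * Real.sqrt h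
    ∧ ((d : ℝ) / 4 ≤ h → 4 * 64 ≤ d →
        (ε / (2 * Real.sqrt d)) * Real.sqrt h ≤ ‖θ ω - θ ω'‖ ∧ ε / 4 ≤ ‖θ ω - θ ω'‖) :=
  theta_omega_separation_general d u hu ε hε hε1 hεd ω ω' hω hω' huω huω'
end
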